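/- Let K_1 ⊆ ℂ^{p_1} and K_2 ⊆ ℂ^{p_2} be determining compact sets. If A = (a_j) ⊆ K_1 is a pseudo Leja sequence for K_1 with Edrei growth (M'_j)_{j≥1} and B = (b_j) ⊆ K_2 is a pseudo Leja sequence for K_2 with Edrei growth (M''_j)_{j≥1}, then the intertwining sequence Ω = A ⊕ B is a pseudo Leja sequence for K = K_1 × K_2 ⊆ ℂ^{p_1+p_2} with Edrei growth M_j = M'_{φ_1(j)}·M''_{φ_2(j)} (with the convention M'_0 = M''_0 = 1). -/

import Mathlib

open scoped BigOperators
open Filter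

namespace PseudoLeja

/-- Graded lexicographic strict order on multi-indices in `ℕ^p`:
`α ≺ β` iff `|α| < |β|`, or `|α| = |β|` and the leftmost nonzero entry of `α - β`
is negative (i.e. at the first index where they differ, `α` is smaller). -/
def GLexLT {p : ℕ} (α β : Fin p → ℕ) : Prop :=
  (∑ i, α i) < (∑ i, β i) ∨
    ((∑ i, α i) = (∑ i, β i) ∧ ∃ k, (∀ i, i < k → α i = β i) ∧ α k < β k)

/-- `κ : ℕ → ℕ^p` is the (unique) enumeration of all multi-indices that is strictly
increasing from the usual order on `ℕ` to the graded lexicographic order. -/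
def IsGLexEnum {p : ℕ} (κ : ℕ → Fin p → ℕ) : Prop :=
  Function.Bijective κ ∧ ∀ m n : ℕ, m < n → GLexLT (κ m) (κ n)

/-- The `N`-th monomial `e_N(z) = z^{κ(N)}`. -/
noncomputable def mono {p : ℕ} (κ : ℕ → Fin p → ℕ) (N : ℕ) (z : Fin p → ℂ) : ℂ :=
  ∏ i, z i ^ κ N i

/-- Vandermonde determinant of the points `ξ 0, …, ξ (n-1)`:
`vdm κ n ξ = det [e_N(ξ_M)]_{0 ≤ M, N ≤ n-1}`. -/
noncomputable def vdm {p : ℕ} (κ : ℕ → Fin p → ℕ) (n : ℕ) (ξ : ℕ → Fin p → ℂ) : ℂ :=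
  Matrix.det (Matrix.of fun M N : Fin n => mono κ (N : ℕ) (ξ (M : ℕ)))

/-- A set `K ⊆ ℂ^p` is determining if no nonzero polynomial in `p` complex
variables vanishes identically on `K`. -/
def Determining {p : ℕ} (K : Set (Fin p → ℂ)) : Prop :=
  ∀ P : MvPolynomial (Fin p) ℂ, (∀ z ∈ K, MvPolynomial.eval z P = 0) → P = 0

/-- `h_d = C(p+d, d)`, the dimension of the space of polynomials of total degree
at most `d` in `p` variables. -/
def hdim (p d : ℕ) : ℕ := Nat.choose (p + d) d

/-- `l_d = p·C(p+d, p+1)`, the degree of the Vandermonde determinant of `h_d` points. -/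
def ldim (p d : ℕ) : ℕ := p * Nat.choose (p + d) (p + 1)

/-- `V_j(K)`, the maximal modulus of the Vandermonde determinant of `j` points of `K`. -/
noncomputable def Vsup {p : ℕ} (κ : ℕ → Fin p → ℕ) (K : Set (Fin p → ℂ)) (j : ℕ) : ℝ :=
  sSup { v : ℝ | ∃ ξ : ℕ → Fin p → ℂ, (∀ i, ξ i ∈ K) ∧ v = ‖vdm κ j ξ‖ }

/-- `(ξ_j)_{j≥0} ⊆ K` is a pseudo Leja sequence for `K` with Edrei growth `(M_j)_{j≥1}`:
`M_j ≥ 1`, `M_j·|vdm(ξ_0,…,ξ_j)| ≥ max_{z∈K} |vdm(ξ_0,…,ξ_{j-1},z)|` for `j ≥ 1`, and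
`lim_{d→∞} (max_{h_{d-1} ≤ j < h_d} M_j)^{1/d} = 1`. -/
def IsPseudoLeja {p : ℕ} (κ : ℕ → Fin p → ℕ) (K : Set (Fin p → ℂ))
    (ξ : ℕ → Fin p → ℂ) (M : ℕ → ℝ) : Prop :=
  (∀ j, ξ j ∈ K) ∧
  (∀ j, 1 ≤ j → 1 ≤ M j) ∧
  (∀ j, 1 ≤ j → ∀ z ∈ K,
    ‖vdm κ (j + 1) (Function.update ξ j z)‖ ≤
      M j * ‖vdm κ (j + 1) ξ‖) ∧
  Filter.Tendsto
    (fun d : ℕ => (sSup (M '' Set.Ico (hdim p (d - 1)) (hdim p d))) ^ ((d : ℝ)⁻¹))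
    Filter.atTop (nhds 1)


/-!
If `vdm(ξ_0, …, ξ_{j-1}) ≠ 0`, there is a Newton polynomial `G = e_j + Σ_{N<j} c_N e_N` vanishing at
`ξ_0, …, ξ_{j-1}`, and a column operation gives `vdm(ξ_0, …, ξ_{j-1}, z) = G(z) · vdm(ξ_0, …, ξ_{j-1})`.
For a pseudo Leja sequence on a determining set all these Vandermonde determinants are nonzero
(a nonzero polynomial cannot vanish on `K`), so the defining inequality at step `u` becomes
`|G_u(z)| ≤ M_u |G_u(ξ_u)|` on `K`.

For `Ω = A ⊕ B` the product `G_{φ₁ j}(x) · G_{φ₂ j}(y)` is again a Newton polynomial at step `j`: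
its lower monomials come before `j` because the intertwining is monotone in both indices, and it
vanishes at `ω_i`, `i < j`, because then `φ₁ i < φ₁ j` or `φ₂ i < φ₂ j`. The inequality for `Ω`
is the product of the two factor inequalities. For the growth, an index of total degree `d` splits
into indices of degree at most `d` on each side, and bounds `M_k ≤ c^{deg k}` for large degrees
give `M_k ≤ c^d` for all `deg k ≤ d` once `d` is large.
-/

theorem GLexLT.asymm {p : ℕ} {α β : Fin p → ℕ} (h : GLexLT α β) : ¬GLexLT β α := by
  rintro (h' | ⟨hs', k', hk', hlt'⟩) <;> rcases h with h | ⟨hs, k, hk, hlt⟩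
  any_goals omega
  rcases lt_trichotomy k k' with hkk | rfl | hkk
  · have := hk' k hkk; omega
  · omega
  · have := hk k' hkk; omega

theorem GLexLT.irrefl {p : ℕ} {α : Fin p → ℕ} : ¬GLexLT α α := fun h => h.asymm h

theorem hdim_pos (p d : ℕ) : 0 < hdim p d :=
  Nat.choose_pos (by omega)

theorem ncard_setOf_sum_le (p d : ℕ) : {α : Fin p → ℕ | ∑ i, α i ≤ d}.ncard = hdim p d := by
  -- a slack coordinate `d - |α|` identifies these `α` with `Sym (Fin (p + 1)) d`
  let e : {α : Fin p → ℕ // ∑ i, α i ≤ d} ≃ {β : Fin (p + 1) → ℕ // ∑ i, β i = d} :=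
    { toFun := fun α => ⟨Fin.cons (d - ∑ i, α.1 i) α.1, by
        simp only [Fin.sum_univ_succ, Fin.cons_zero, Fin.cons_succ]; have := α.2; omega⟩
      invFun := fun β => ⟨Fin.tail β.1, by
        have := β.2; rw [Fin.sum_univ_succ] at this; simp only [Fin.tail]; omega⟩
      left_inv := fun α => by simp
      right_inv := fun β => Subtype.ext <| by
        have := β.2
        rw [Fin.sum_univ_succ] at this
        conv_rhs => rw [← Fin.cons_self_tail β.1]
        change Fin.cons (d - ∑ i, Fin.tail β.1 i) (Fin.tail β.1) = _
        congr 1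
        simp only [Fin.tail]
        omega }
  rw [← Nat.card_coe_set_eq, Set.coe_ofPred, Nat.card_congr (e.trans
    (Sym.equivNatSumOfFintype (Fin (p + 1)) d).symm), Sym.natCard_sym_eq_choose, Nat.card_fin,
    hdim]
  congr 1; omega

namespace IsGLexEnum

variable {p : ℕ} {κ : ℕ → Fin p → ℕ}

theorem le_of_eq_or_glexLT (hκ : IsGLexEnum κ) {m n : ℕ}
    (h : κ m = κ n ∨ GLexLT (κ m) (κ n)) : m ≤ n := by
  by_contra! hnm
  have hlt := hκ.2 n m hnm
  rcases h with h | h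
  · exact GLexLT.irrefl (h ▸ hlt)
  · exact h.asymm hlt

theorem sum_le_sum_of_le (hκ : IsGLexEnum κ) {m n : ℕ} (h : m ≤ n) :
    ∑ i, κ m i ≤ ∑ i, κ n i := by
  rcases h.lt_or_eq with h | rfl
  · rcases hκ.2 m n h with h | ⟨h, _⟩ <;> omega
  · rfl

theorem apply_zero (hκ : IsGLexEnum κ) : κ 0 = 0 := by
  obtain ⟨j, hj⟩ := hκ.1.2 0
  obtain rfl | hj0 := j.eq_zero_or_pos
  · exact hj
  · rcases hj ▸ hκ.2 0 j hj0 with h | ⟨-, k, -, h⟩ <;> simp at h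

theorem pos (hκ : IsGLexEnum κ) : 0 < p := by
  rcases p.eq_zero_or_pos with rfl | hp
  · exact absurd (hκ.1.1 (Subsingleton.elim (κ 0) (κ 1))) zero_ne_one
  · exact hp

theorem exists_sum_eq (hκ : IsGLexEnum κ) (d : ℕ) : ∃ j, ∑ i, κ j i = d := by
  obtain ⟨j, hj⟩ := hκ.1.2 (Pi.single ⟨0, hκ.pos⟩ d)
  exact ⟨j, by simp [hj]⟩

theorem lt_hdim_iff (hκ : IsGLexEnum κ) {d j : ℕ} : j < hdim p d ↔ ∑ i, κ j i ≤ d := by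
  set S := {j : ℕ | ∑ i, κ j i ≤ d}
  have hS : S.ncard = hdim p d := by
    rw [← ncard_setOf_sum_le]
    exact Set.ncard_preimage_of_injective_subset_range (s := {α | ∑ i, α i ≤ d}) hκ.1.1
      (by simp [hκ.1.2.range_eq])
  constructor
  · intro hj
    by_contra! hdeg
    have hsub : S ⊆ Set.Iio j := fun k hk => by
      by_contra! hjk
      simp only [Set.mem_Iio, not_lt] at hjk
      exact absurd (le_trans (hκ.sum_le_sum_of_le hjk) hk) (not_le.2 hdeg)
    have := Set.ncard_le_ncard hsub (Set.finite_Iio j)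
    simp only [hS, Set.ncard_Iio_nat] at this
    omega
  · intro hj
    have hfin : S.Finite := Set.finite_of_ncard_pos (hS ▸ hdim_pos p d)
    have hsub : Set.Iic j ⊆ S := fun k hk => le_trans (hκ.sum_le_sum_of_le hk) hj
    have := Set.ncard_le_ncard hsub hfin
    rw [hS, Set.ncard_Iic_nat] at this
    omega

theorem mem_Ico_hdim_iff (hκ : IsGLexEnum κ) {d j : ℕ} (hd : 1 ≤ d) :
    j ∈ Set.Ico (hdim p (d - 1)) (hdim p d) ↔ ∑ i, κ j i = d := by
  rw [Set.mem_Ico, hκ.lt_hdim_iff, ← not_lt, hκ.lt_hdim_iff]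
  omega

end IsGLexEnum

section Append

variable {p₁ p₂ : ℕ}

theorem sum_append {M : Type*} [AddCommMonoid M] (α : Fin p₁ → M) (β : Fin p₂ → M) :
    ∑ i, Fin.append α β i = ∑ i, α i + ∑ i, β i := by
  simp [Fin.sum_univ_add]

theorem GLexLT.append_right (α : Fin p₁ → ℕ) {β β' : Fin p₂ → ℕ} (h : GLexLT β β') :
    GLexLT (Fin.append α β) (Fin.append α β') := by
  rcases h with h | ⟨hs, k, hk, hlt⟩
  · left
    simp only [sum_append]
    omega
  · refine Or.inr ⟨by simp only [sum_append]; omega, Fin.natAdd p₁ k, fun i hi => ?_, by simpa⟩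
    induction i using Fin.addCases with
    | left i => simp
    | right i => simpa using hk i (by simpa using hi)

theorem GLexLT.append_left {α α' : Fin p₁ → ℕ} {β β' : Fin p₂ → ℕ} (h : GLexLT α α')
    (hβ : ∑ i, β i ≤ ∑ i, β' i) : GLexLT (Fin.append α β) (Fin.append α' β') := by
  rcases h with h | ⟨hs, k, hk, hlt⟩
  · left
    simp only [sum_append]
    omega
  · rcases hβ.lt_or_eq with hβ | hβ
    · left
      simp only [sum_append]
      omega
    refine Or.inr ⟨by simp only [sum_append]; omega, Fin.castAdd p₂ k, fun i hi => ?_, by simpa⟩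
    induction i using Fin.addCases with
    | left i => simpa using hk i hi
    | right i => simp [Fin.lt_def] at hi; omega

end Append

section Intertwining

variable {p₁ p₂ : ℕ} {κ₁ : ℕ → Fin p₁ → ℕ} {κ₂ : ℕ → Fin p₂ → ℕ} {κ : ℕ → Fin (p₁ + p₂) → ℕ}
  {φ₁ φ₂ : ℕ → ℕ}

theorem le_of_phi_le (hκ₁ : IsGLexEnum κ₁) (hκ₂ : IsGLexEnum κ₂) (hκ : IsGLexEnum κ)
    (hφ : ∀ j, κ j = Fin.append (κ₁ (φ₁ j)) (κ₂ (φ₂ j))) {m n : ℕ}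
    (h₁ : φ₁ m ≤ φ₁ n) (h₂ : φ₂ m ≤ φ₂ n) : m ≤ n := by
  apply hκ.le_of_eq_or_glexLT
  rw [hφ m, hφ n]
  rcases h₁.lt_or_eq with h₁ | h₁
  · exact Or.inr ((hκ₁.2 _ _ h₁).append_left (hκ₂.sum_le_sum_of_le h₂))
  rcases h₂.lt_or_eq with h₂ | h₂
  · exact Or.inr (h₁ ▸ (hκ₂.2 _ _ h₂).append_right _)
  · exact Or.inl (by rw [h₁, h₂])

theorem exists_phi_eq (hκ₁ : IsGLexEnum κ₁) (hκ₂ : IsGLexEnum κ₂) (hκ : IsGLexEnum κ)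
    (hφ : ∀ j, κ j = Fin.append (κ₁ (φ₁ j)) (κ₂ (φ₂ j))) (u v : ℕ) :
    ∃ j, φ₁ j = u ∧ φ₂ j = v := by
  obtain ⟨j, hj⟩ := hκ.1.2 (Fin.append (κ₁ u) (κ₂ v))
  rw [hφ] at hj
  obtain ⟨h₁, h₂⟩ := Prod.ext_iff.1
    ((Fin.appendEquiv p₁ p₂).injective (a₁ := (_, _)) (a₂ := (_, _)) hj)
  exact ⟨j, hκ₁.1.1 h₁, hκ₂.1.1 h₂⟩

end Intertwining

section Vandermonde

variable {p : ℕ} {κ : ℕ → Fin p → ℕ}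

theorem vdm_zero (κ : ℕ → Fin p → ℕ) (ξ : ℕ → Fin p → ℂ) : vdm κ 0 ξ = 1 :=
  Matrix.det_fin_zero

theorem vdm_one (hκ : IsGLexEnum κ) (ξ : ℕ → Fin p → ℂ) : vdm κ 1 ξ = 1 := by
  simp [vdm, mono, hκ.apply_zero]

theorem eval_monomial_equivFunOnFinite_symm (κ : ℕ → Fin p → ℕ) (N : ℕ) (c : ℂ)
    (z : Fin p → ℂ) :
    MvPolynomial.eval z (MvPolynomial.monomial (Finsupp.equivFunOnFinite.symm (κ N)) c) =
      c * mono κ N z := by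
  rw [MvPolynomial.eval_monomial, Finsupp.prod_fintype _ _ (fun i => pow_zero (z i))]
  rfl

def IsNewtonPoly (κ : ℕ → Fin p → ℕ) (ξ : ℕ → Fin p → ℂ) (j : ℕ) (G : (Fin p → ℂ) → ℂ) :
    Prop :=
  G - mono κ j ∈ Submodule.span ℂ (mono κ '' Set.Iio j) ∧ ∀ i < j, G (ξ i) = 0

theorem IsNewtonPoly.mem_span {ξ : ℕ → Fin p → ℂ} {j : ℕ} {G : (Fin p → ℂ) → ℂ}
    (hG : IsNewtonPoly κ ξ j G) : G ∈ Submodule.span ℂ (mono κ '' Set.Iio (j + 1)) := by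
  rw [← sub_add_cancel G (mono κ j)]
  refine add_mem (Submodule.span_mono ?_ hG.1) (Submodule.subset_span ⟨j, j.lt_succ_self, rfl⟩)
  exact Set.image_mono (Set.Iio_subset_Iio j.le_succ)

theorem IsNewtonPoly.vdm_update {ξ : ℕ → Fin p → ℂ} {j : ℕ} {G : (Fin p → ℂ) → ℂ}
    (hG : IsNewtonPoly κ ξ j G) (z : Fin p → ℂ) :
    vdm κ (j + 1) (Function.update ξ j z) = G z * vdm κ j ξ := by
  set A : Matrix (Fin (j + 1)) (Fin (j + 1)) ℂ :=
    Matrix.of fun M N => mono κ N (Function.update ξ j z M)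
  -- `L g` replaces the last column by the values of `g`; it kills `e_0, …, e_{j-1}` (repeated
  -- columns), hence `L G = L e_j`.
  let L : ((Fin p → ℂ) → ℂ) →ₗ[ℂ] ℂ :=
    { toFun := fun g => (A.updateCol (Fin.last j) fun M => g (Function.update ξ j z M)).det
      map_add' := fun f g => Matrix.det_updateCol_add _ _ _ _
      map_smul' := fun c g => Matrix.det_updateCol_smul _ _ _ _ }
  have hlower : L (G - mono κ j) = 0 := by
    refine (Submodule.span_le.2 ?_ : _ ≤ LinearMap.ker L) hG.1
    rintro _ ⟨N, hN, rfl⟩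
    have hNj : (⟨N, Nat.lt_succ_of_lt hN⟩ : Fin (j + 1)) ≠ Fin.last j := Fin.ne_of_lt hN
    refine Matrix.det_zero_of_column_eq hNj fun M => ?_
    simp [A, Matrix.updateCol_ne hNj]
  have hlast : L (mono κ j) = vdm κ (j + 1) (Function.update ξ j z) := by
    change (A.updateCol (Fin.last j) fun M => A M (Fin.last j)).det = _
    rw [Matrix.updateCol_eq_self]
    rfl
  have hcol : L G = G z * vdm κ j ξ := by
    change (A.updateCol (Fin.last j) fun M => G (Function.update ξ j z M)).det = _
    rw [Matrix.det_succ_column _ (Fin.last j), Fin.sum_univ_castSucc,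
      Finset.sum_eq_zero fun M _ => ?_]
    · simp only [Fin.val_last, ← two_mul, pow_mul, neg_one_sq, one_pow, one_mul, zero_add,
        Matrix.updateCol_self, Function.update_self, vdm]
      congr 2
      ext M N
      simp [A, Function.update_of_ne M.2.ne]
    · simp [Function.update_of_ne M.2.ne, hG.2 M M.2]
  rw [← hlast, ← hcol, ← sub_eq_zero, ← map_sub, ← neg_sub, map_neg, hlower, neg_zero]

theorem IsNewtonPoly.vdm_succ {ξ : ℕ → Fin p → ℂ} {j : ℕ} {G : (Fin p → ℂ) → ℂ}
    (hG : IsNewtonPoly κ ξ j G) : vdm κ (j + 1) ξ = G (ξ j) * vdm κ j ξ := by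
  simpa using hG.vdm_update (ξ j)

theorem exists_isNewtonPoly (hκ : Function.Injective κ) {ξ : ℕ → Fin p → ℂ} {j : ℕ}
    (h : vdm κ j ξ ≠ 0) :
    ∃ P : MvPolynomial (Fin p) ℂ, P ≠ 0 ∧ IsNewtonPoly κ ξ j fun z => P.eval z := by
  let V : Matrix (Fin j) (Fin j) ℂ := Matrix.of fun M N => mono κ N (ξ M)
  let c := V⁻¹.mulVec fun M : Fin j => -mono κ j (ξ M)
  have hc : V.mulVec c = fun M : Fin j => -mono κ j (ξ M) := by
    rw [Matrix.mulVec_mulVec, Matrix.mul_nonsing_inv _ (isUnit_iff_ne_zero.2 h),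
      Matrix.one_mulVec]
  let e : ℕ → Fin p →₀ ℕ := fun N => Finsupp.equivFunOnFinite.symm (κ N)
  let P := MvPolynomial.monomial (e j) 1 + ∑ N : Fin j, MvPolynomial.monomial (e N) (c N)
  have hP : (fun z => P.eval z) = mono κ j + ∑ N : Fin j, c N • mono κ N := by
    ext z
    simp [P, e, eval_monomial_equivFunOnFinite_symm]
  have hcoeff : P.coeff (e j) = 1 := by
    rw [MvPolynomial.coeff_add, MvPolynomial.coeff_monomial, if_pos rfl, MvPolynomial.coeff_sum,
      Finset.sum_eq_zero fun N _ => ?_, add_zero]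
    rw [MvPolynomial.coeff_monomial, if_neg]
    exact fun hN => N.2.ne (hκ (Finsupp.equivFunOnFinite.symm.injective hN))
  refine ⟨P, fun h0 => by simp [h0] at hcoeff, ?_, fun i hi => ?_⟩
  · rw [hP, add_sub_cancel_left]
    exact Submodule.sum_mem _ fun N _ =>
      Submodule.smul_mem _ _ (Submodule.subset_span ⟨N, N.2, rfl⟩)
  · have hi' := congrFun hc ⟨i, hi⟩
    simp only [Matrix.mulVec, dotProduct, V, Matrix.of_apply] at hi'
    simp only [congrFun hP, Pi.add_apply, Finset.sum_apply, Pi.smul_apply, smul_eq_mul]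
    rw [Finset.sum_congr rfl fun N _ => mul_comm _ _, hi', add_neg_cancel]

end Vandermonde

namespace IsPseudoLeja

variable {p : ℕ} {κ : ℕ → Fin p → ℕ} {K : Set (Fin p → ℂ)} {ξ : ℕ → Fin p → ℂ} {M : ℕ → ℝ}

theorem one_le_ite (hξ : IsPseudoLeja κ K ξ M) (u : ℕ) : 1 ≤ if u = 0 then 1 else M u := by
  split_ifs with hu
  · rfl
  · exact hξ.2.1 u (Nat.one_le_iff_ne_zero.2 hu)

theorem vdm_ne_zero (hξ : IsPseudoLeja κ K ξ M) (hκ : IsGLexEnum κ) (hK : Determining K)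
    (n : ℕ) : vdm κ n ξ ≠ 0 := by
  induction n with
  | zero => simp [vdm_zero]
  | succ n ih =>
    obtain rfl | hn := n.eq_zero_or_pos
    · simp [vdm_one hκ]
    obtain ⟨P, hP0, hP⟩ := exists_isNewtonPoly hκ.1.1 ih
    obtain ⟨z, hzK, hz⟩ : ∃ z ∈ K, P.eval z ≠ 0 := by
      by_contra! h
      exact hP0 (hK P h)
    intro h0
    have hle := hξ.2.2.1 n hn z hzK
    rw [h0, norm_zero, mul_zero, norm_le_zero_iff, hP.vdm_update] at hle
    exact mul_ne_zero hz ih hle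

theorem exists_isNewtonPoly_norm_le (hξ : IsPseudoLeja κ K ξ M) (hκ : IsGLexEnum κ)
    (hK : Determining K) (u : ℕ) :
    ∃ G, IsNewtonPoly κ ξ u G ∧ ∀ z ∈ K, ‖G z‖ ≤ (if u = 0 then 1 else M u) * ‖G (ξ u)‖ := by
  have hV := hξ.vdm_ne_zero hκ hK u
  obtain ⟨P, -, hG⟩ := exists_isNewtonPoly hκ.1.1 hV
  refine ⟨_, hG, fun z hz => ?_⟩
  obtain rfl | hu := u.eq_zero_or_pos
  · have hG1 : ∀ w, P.eval w = 1 := fun w => by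
      simpa [vdm_zero, vdm_one hκ] using (hG.vdm_update w).symm
    simp [hG1]
  · have hle := hξ.2.2.1 u hu z hz
    rw [hG.vdm_update, hG.vdm_succ, norm_mul, norm_mul, ← mul_assoc] at hle
    rw [if_neg hu.ne']
    exact le_of_mul_le_mul_right hle (norm_pos_iff.2 hV)

end IsPseudoLeja

section Product

variable {p₁ p₂ : ℕ}

noncomputable def appendMul :
    ((Fin p₁ → ℂ) → ℂ) →ₗ[ℂ] ((Fin p₂ → ℂ) → ℂ) →ₗ[ℂ] (Fin (p₁ + p₂) → ℂ) → ℂ :=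
  (LinearMap.mul ℂ _).compl₁₂
    (LinearMap.funLeft ℂ ℂ fun z => ((Fin.appendEquiv p₁ p₂).symm z).1)
    (LinearMap.funLeft ℂ ℂ fun z => ((Fin.appendEquiv p₁ p₂).symm z).2)

@[simp]
theorem appendMul_apply_append (f : (Fin p₁ → ℂ) → ℂ) (g : (Fin p₂ → ℂ) → ℂ)
    (x : Fin p₁ → ℂ) (y : Fin p₂ → ℂ) : appendMul f g (Fin.append x y) = f x * g y := by
  have := (Fin.appendEquiv p₁ p₂).symm_apply_apply (x, y)
  simp_all [appendMul, LinearMap.funLeft]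

variable {κ₁ : ℕ → Fin p₁ → ℕ} {κ₂ : ℕ → Fin p₂ → ℕ} {κ : ℕ → Fin (p₁ + p₂) → ℕ}
  {φ₁ φ₂ : ℕ → ℕ}

theorem mono_eq_appendMul (hφ : ∀ j, κ j = Fin.append (κ₁ (φ₁ j)) (κ₂ (φ₂ j))) (j : ℕ) :
    mono κ j = appendMul (mono κ₁ (φ₁ j)) (mono κ₂ (φ₂ j)) := by
  ext z
  obtain ⟨⟨x, y⟩, rfl⟩ := (Fin.appendEquiv p₁ p₂).surjective z
  change mono κ j (Fin.append x y) = appendMul _ _ (Fin.append x y)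
  simp [mono, hφ, Fin.prod_univ_add]

theorem IsNewtonPoly.intertwining (hκ₁ : IsGLexEnum κ₁) (hκ₂ : IsGLexEnum κ₂)
    (hκ : IsGLexEnum κ) (hφ : ∀ j, κ j = Fin.append (κ₁ (φ₁ j)) (κ₂ (φ₂ j)))
    {a : ℕ → Fin p₁ → ℂ} {b : ℕ → Fin p₂ → ℂ} {ω : ℕ → Fin (p₁ + p₂) → ℂ}
    (hω : ∀ j, ω j = Fin.append (a (φ₁ j)) (b (φ₂ j))) {j : ℕ}
    {G₁ : (Fin p₁ → ℂ) → ℂ} {G₂ : (Fin p₂ → ℂ) → ℂ}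
    (h₁ : IsNewtonPoly κ₁ a (φ₁ j) G₁) (h₂ : IsNewtonPoly κ₂ b (φ₂ j) G₂) :
    IsNewtonPoly κ ω j (appendMul G₁ G₂) := by
  have hspan : ∀ U V, (∀ N, φ₁ N < U → φ₂ N < V → N < j) →
      Submodule.map₂ appendMul (Submodule.span ℂ (mono κ₁ '' Set.Iio U))
        (Submodule.span ℂ (mono κ₂ '' Set.Iio V)) ≤ Submodule.span ℂ (mono κ '' Set.Iio j) := by
    intro U V h
    rw [Submodule.map₂_span_span]
    refine Submodule.span_mono ?_
    rintro _ ⟨_, ⟨u, hu, rfl⟩, _, ⟨v, hv, rfl⟩, rfl⟩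
    obtain ⟨N, rfl, rfl⟩ := exists_phi_eq hκ₁ hκ₂ hκ hφ u v
    exact ⟨N, h N hu hv, mono_eq_appendMul hφ N⟩
  have hlt : ∀ N, φ₁ N ≤ φ₁ j → φ₂ N ≤ φ₂ j → N ≠ j → N < j := fun N hN₁ hN₂ hN =>
    (le_of_phi_le hκ₁ hκ₂ hκ hφ hN₁ hN₂).lt_of_ne hN
  refine ⟨?_, fun i hi => ?_⟩
  · have hsplit : appendMul G₁ G₂ - mono κ j = appendMul (G₁ - mono κ₁ (φ₁ j)) G₂ +
        appendMul (mono κ₁ (φ₁ j)) (G₂ - mono κ₂ (φ₂ j)) := by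
      rw [mono_eq_appendMul hφ, map_sub, LinearMap.sub_apply, map_sub]
      abel
    rw [hsplit]
    refine add_mem (hspan _ _ ?_ (Submodule.apply_mem_map₂ _ h₁.1 h₂.mem_span))
      (hspan _ _ ?_ (Submodule.apply_mem_map₂ _
        (Submodule.subset_span ⟨φ₁ j, (φ₁ j).lt_succ_self, rfl⟩) h₂.1))
    · exact fun N hN₁ hN₂ => hlt N hN₁.le (Nat.lt_succ_iff.1 hN₂) (by rintro rfl; omega)
    · exact fun N hN₁ hN₂ => hlt N (Nat.lt_succ_iff.1 hN₁) hN₂.le (by rintro rfl; omega)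
  · rw [hω, appendMul_apply_append]
    by_cases h : φ₁ i < φ₁ j
    · rw [h₁.2 _ h, zero_mul]
    · have : φ₂ i < φ₂ j := by
        by_contra! h'
        exact absurd (le_of_phi_le hκ₁ hκ₂ hκ hφ (not_lt.1 h) h') (not_le.2 hi)
      rw [h₂.2 _ this, mul_zero]

end Product

section Growth

theorem eventually_le_pow_of_tendsto_rpow_inv {x : ℕ → ℝ} (hx : ∀ d, 0 ≤ x d)
    (h : Tendsto (fun d : ℕ => x d ^ (d : ℝ)⁻¹) atTop (nhds 1)) {c : ℝ} (hc : 1 < c) :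
    ∀ᶠ d in atTop, x d ≤ c ^ d := by
  filter_upwards [h.eventually (gt_mem_nhds hc), eventually_ne_atTop 0] with d hd hd0
  calc x d = (x d ^ (d : ℝ)⁻¹) ^ d := (Real.rpow_inv_natCast_pow (hx d) hd0).symm
    _ ≤ c ^ d := pow_le_pow_left₀ (Real.rpow_nonneg (hx d) _) hd.le d

theorem tendsto_rpow_inv_of_eventually_le_pow {x : ℕ → ℝ} (h₁ : ∀ᶠ d in atTop, 1 ≤ x d)
    (h : ∀ c > 1, ∀ᶠ d in atTop, x d ≤ c ^ d) :
    Tendsto (fun d : ℕ => x d ^ (d : ℝ)⁻¹) atTop (nhds 1) := by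
  refine tendsto_order.2 ⟨fun a ha => ?_, fun a ha => ?_⟩
  · filter_upwards [h₁] with d hd
    exact ha.trans_le (Real.one_le_rpow hd (by positivity))
  · obtain ⟨c, hc, hca⟩ := exists_between ha
    filter_upwards [h c hc, h₁, eventually_ne_atTop 0] with d hd hd₁ hd0
    calc x d ^ (d : ℝ)⁻¹ ≤ (c ^ d) ^ (d : ℝ)⁻¹ :=
          Real.rpow_le_rpow (by linarith) hd (by positivity)
      _ = c := Real.pow_rpow_inv_natCast (by linarith) hd0
      _ < a := hca

theorem eventually_forall_le_pow {f : ℕ → ℝ} {deg : ℕ → ℕ}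
    (hfin : ∀ e, {k | deg k ≤ e}.Finite) (h : ∀ c > 1, ∀ᶠ e in atTop, ∀ k, deg k = e → f k ≤ c ^ e)
    {c : ℝ} (hc : 1 < c) : ∀ᶠ d in atTop, ∀ k, deg k ≤ d → f k ≤ c ^ d := by
  obtain ⟨E, hE⟩ := eventually_atTop.1 (h c hc)
  obtain ⟨C, hC⟩ := ((hfin E).image f).bddAbove
  filter_upwards [(tendsto_pow_atTop_atTop_of_one_lt hc).eventually_ge_atTop C] with d hCd k hk
  by_cases hkE : E ≤ deg k
  · exact (hE _ hkE k rfl).trans (pow_le_pow_right₀ hc.le hk)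
  · exact (hC ⟨k, show deg k ≤ E by omega, rfl⟩).trans hCd

end Growth

namespace IsPseudoLeja

variable {p : ℕ} {κ : ℕ → Fin p → ℕ} {K : Set (Fin p → ℂ)} {ξ : ℕ → Fin p → ℂ} {M : ℕ → ℝ}

theorem eventually_le_pow (hξ : IsPseudoLeja κ K ξ M) (hκ : IsGLexEnum κ) {c : ℝ} (hc : 1 < c) :
    ∀ᶠ d in atTop, ∀ k, ∑ i, κ k i ≤ d → (if k = 0 then 1 else M k) ≤ c ^ d := by
  refine eventually_forall_le_pow (fun e => ?_) (fun c hc => ?_) hc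
  · exact (Set.finite_Iio (hdim p e)).subset fun k hk => hκ.lt_hdim_iff.2 hk
  have hblock : ∀ d, 0 ≤ sSup (M '' Set.Ico (hdim p (d - 1)) (hdim p d)) := fun d =>
    Real.sSup_nonneg (by
      rintro _ ⟨k, hk, rfl⟩
      exact zero_le_one.trans (hξ.2.1 k ((hdim_pos p _).trans_le hk.1)))
  filter_upwards [eventually_le_pow_of_tendsto_rpow_inv hblock hξ.2.2.2 hc,
    eventually_ge_atTop 1] with d hd hd₁ k hk
  have hk' := (hκ.mem_Ico_hdim_iff hd₁).2 hk
  rw [if_neg ((hdim_pos p _).trans_le hk'.1).ne']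
  exact (le_csSup ((Set.finite_Ico _ _).image M).bddAbove ⟨k, hk', rfl⟩).trans hd

end IsPseudoLeja

theorem tendsto_intertwining_growth {p₁ p₂ : ℕ} {κ₁ : ℕ → Fin p₁ → ℕ} {κ₂ : ℕ → Fin p₂ → ℕ}
    {κ : ℕ → Fin (p₁ + p₂) → ℕ} {φ₁ φ₂ : ℕ → ℕ} (hκ₁ : IsGLexEnum κ₁) (hκ₂ : IsGLexEnum κ₂)
    (hκ : IsGLexEnum κ) (hφ : ∀ j, κ j = Fin.append (κ₁ (φ₁ j)) (κ₂ (φ₂ j)))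
    {K₁ : Set (Fin p₁ → ℂ)} {K₂ : Set (Fin p₂ → ℂ)} {a : ℕ → Fin p₁ → ℂ} {b : ℕ → Fin p₂ → ℂ}
    {M' M'' : ℕ → ℝ} (hA : IsPseudoLeja κ₁ K₁ a M') (hB : IsPseudoLeja κ₂ K₂ b M'') :
    Tendsto (fun d : ℕ => (sSup ((fun j => (if φ₁ j = 0 then 1 else M' (φ₁ j)) *
        (if φ₂ j = 0 then 1 else M'' (φ₂ j))) ''
          Set.Ico (hdim (p₁ + p₂) (d - 1)) (hdim (p₁ + p₂) d))) ^ ((d : ℝ)⁻¹))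
      atTop (nhds 1) := by
  set m := fun j => (if φ₁ j = 0 then 1 else M' (φ₁ j)) * (if φ₂ j = 0 then 1 else M'' (φ₂ j))
  refine tendsto_rpow_inv_of_eventually_le_pow ?_ fun c hc => ?_
  · filter_upwards [eventually_ge_atTop 1] with d hd
    obtain ⟨j, hj⟩ := hκ.exists_sum_eq d
    exact (one_le_mul_of_one_le_of_one_le (hA.one_le_ite _) (hB.one_le_ite _)).trans
      (le_csSup ((Set.finite_Ico _ _).image m).bddAbove ⟨j, (hκ.mem_Ico_hdim_iff hd).2 hj, rfl⟩)
  · have hc' : 1 < √c := by rwa [Real.lt_sqrt zero_le_one, one_pow]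
    filter_upwards [hA.eventually_le_pow hκ₁ hc', hB.eventually_le_pow hκ₂ hc',
      eventually_ge_atTop 1] with d h₁ h₂ hd
    refine Real.sSup_le ?_ (by positivity)
    rintro _ ⟨j, hj, rfl⟩
    have hdeg := (hκ.mem_Ico_hdim_iff hd).1 hj
    rw [hφ, sum_append] at hdeg
    calc m j ≤ √c ^ d * √c ^ d := mul_le_mul (h₁ _ (by omega)) (h₂ _ (by omega))
          (zero_le_one.trans (hB.one_le_ite _)) (by positivity)
      _ = c ^ d := by rw [← mul_pow, Real.mul_self_sqrt (by linarith)]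

theorem intertwining_of_pseudoLeja_general {p₁ p₂ : ℕ}
    (κ₁ : ℕ → Fin p₁ → ℕ) (κ₂ : ℕ → Fin p₂ → ℕ) (κ : ℕ → Fin (p₁ + p₂) → ℕ)
    (hκ₁ : IsGLexEnum κ₁) (hκ₂ : IsGLexEnum κ₂) (hκ : IsGLexEnum κ)
    (φ₁ φ₂ : ℕ → ℕ)
    (hφ : ∀ j : ℕ, κ j = Fin.append (κ₁ (φ₁ j)) (κ₂ (φ₂ j)))
    (K₁ : Set (Fin p₁ → ℂ)) (K₂ : Set (Fin p₂ → ℂ))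
    (hK₁d : Determining K₁) (hK₂d : Determining K₂)
    (a : ℕ → Fin p₁ → ℂ) (b : ℕ → Fin p₂ → ℂ)
    (M' M'' : ℕ → ℝ)
    (hA : IsPseudoLeja κ₁ K₁ a M') (hB : IsPseudoLeja κ₂ K₂ b M'')
    (ω : ℕ → Fin (p₁ + p₂) → ℂ)
    (hω : ∀ j : ℕ, ω j = Fin.append (a (φ₁ j)) (b (φ₂ j))) :
    IsPseudoLeja κ (Set.image2 Fin.append K₁ K₂) ω
      (fun j => (if φ₁ j = 0 then 1 else M' (φ₁ j)) *
                (if φ₂ j = 0 then 1 else M'' (φ₂ j))) := by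
  refine ⟨fun j => hω j ▸ Set.mem_image2_of_mem (hA.1 _) (hB.1 _),
    fun j _ => one_le_mul_of_one_le_of_one_le (hA.one_le_ite _) (hB.one_le_ite _),
    fun j _ z hz => ?_, tendsto_intertwining_growth hκ₁ hκ₂ hκ hφ hA hB⟩
  obtain ⟨z₁, hz₁, z₂, hz₂, rfl⟩ := hz
  obtain ⟨G₁, hG₁, hG₁K⟩ := hA.exists_isNewtonPoly_norm_le hκ₁ hK₁d (φ₁ j)
  obtain ⟨G₂, hG₂, hG₂K⟩ := hB.exists_isNewtonPoly_norm_le hκ₂ hK₂d (φ₂ j)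
  have hG := hG₁.intertwining hκ₁ hκ₂ hκ hφ hω hG₂
  rw [hG.vdm_update, hG.vdm_succ, hω j]
  simp only [appendMul_apply_append, norm_mul]
  calc ‖G₁ z₁‖ * ‖G₂ z₂‖ * ‖vdm κ j ω‖
      ≤ ((if φ₁ j = 0 then 1 else M' (φ₁ j)) * ‖G₁ (a (φ₁ j))‖) *
          ((if φ₂ j = 0 then 1 else M'' (φ₂ j)) * ‖G₂ (b (φ₂ j))‖) * ‖vdm κ j ω‖ := by
        gcongr
        · exact mul_nonneg (zero_le_one.trans (hA.one_le_ite _)) (norm_nonneg _)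
        · exact hG₁K z₁ hz₁
        · exact hG₂K z₂ hz₂
    _ = _ := by ring

/-- if `A` is a pseudo Leja sequence for `K₁` with Edrei growth `(M'_j)` and
`B` is a pseudo Leja sequence for `K₂` with Edrei growth `(M''_j)`, then the intertwining
sequence `Ω = A ⊕ B` is a pseudo Leja sequence for `K = K₁ × K₂` with Edrei growth
`M_j = M'_{φ₁(j)}·M''_{φ₂(j)}` (with the convention `M'_0 = M''_0 = 1`). -/
theorem intertwining_of_pseudoLeja {p₁ p₂ : ℕ} (hp₁ : 1 ≤ p₁) (hp₂ : 1 ≤ p₂)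
    (κ₁ : ℕ → Fin p₁ → ℕ) (κ₂ : ℕ → Fin p₂ → ℕ) (κ : ℕ → Fin (p₁ + p₂) → ℕ)
    (hκ₁ : IsGLexEnum κ₁) (hκ₂ : IsGLexEnum κ₂) (hκ : IsGLexEnum κ)
    (φ₁ φ₂ : ℕ → ℕ)
    (hφ : ∀ j : ℕ, κ j = Fin.append (κ₁ (φ₁ j)) (κ₂ (φ₂ j)))
    (K₁ : Set (Fin p₁ → ℂ)) (K₂ : Set (Fin p₂ → ℂ))
    (hK₁c : IsCompact K₁) (hK₂c : IsCompact K₂)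
    (hK₁d : Determining K₁) (hK₂d : Determining K₂)
    (a : ℕ → Fin p₁ → ℂ) (b : ℕ → Fin p₂ → ℂ)
    (M' M'' : ℕ → ℝ)
    (hA : IsPseudoLeja κ₁ K₁ a M') (hB : IsPseudoLeja κ₂ K₂ b M'')
    (ω : ℕ → Fin (p₁ + p₂) → ℂ)
    (hω : ∀ j : ℕ, ω j = Fin.append (a (φ₁ j)) (b (φ₂ j))) :
    IsPseudoLeja κ (Set.image2 Fin.append K₁ K₂) ω
      (fun j => (if φ₁ j = 0 then 1 else M' (φ₁ j)) *
                (if φ₂ j = 0 then 1 else M'' (φ₂ j))) :=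
  intertwining_of_pseudoLeja_general κ₁ κ₂ κ hκ₁ hκ₂ hκ φ₁ φ₂ hφ K₁ K₂ hK₁d hK₂d a b M' M'' hA hB ω
    hω

end PseudoLeja
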